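/- arXiv:2211.12537 — 3 statements merged into one kernel-verified Lean document; each statement's English description precedes it below -/
import Mathlib

section
/- Let q ≥ 1 and m an integer with 0 ≤ m < 2^q − 1, and set t = m/(2^q − 1) ∈ ℝ/ℤ. Then (t+1)/2 is a periodic point of period dividing q for the doubling map θ ↦ 2θ on ℝ/ℤ (i.e. 2^q·(t+1)/2 ≡ (t+1)/2 mod 1) if and only if m is odd. -/
/-- For `t = m/(2^q − 1)`, the point `(t+1)/2` is periodic of period dividing `q`
under the doubling map on `ℝ/ℤ` (i.e. `2^q·(t+1)/2 ≡ (t+1)/2 mod 1`) iff `m` is odd. -/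
theorem stmt9 (q m : ℕ) (hq : 1 ≤ q) (hm : m < 2 ^ q - 1) :
    (∃ k : ℤ,
        (2 : ℝ) ^ q * (((m : ℝ) / ((2 : ℝ) ^ q - 1) + 1) / 2)
          - ((m : ℝ) / ((2 : ℝ) ^ q - 1) + 1) / 2 = (k : ℝ))
      ↔ Odd m := by
  have h2 : (2 : ℝ) ^ q ≥ 2 := by
    calc (2:ℝ)^q ≥ 2^1 := by
          apply pow_le_pow_right₀ (by norm_num) hq
      _ = 2 := by norm_num
  have hN : (2 : ℝ) ^ q - 1 ≠ 0 := by linarith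
  have hqe : q = (q - 1) + 1 := (Nat.succ_pred_eq_of_pos hq).symm
  have hpow : (2 : ℝ) ^ q = 2 * 2 ^ (q - 1) := by
    conv_lhs => rw [hqe, pow_succ, mul_comm]
  have hsimp : ∀ k : ℤ,
      ((2 : ℝ) ^ q * (((m : ℝ) / ((2 : ℝ) ^ q - 1) + 1) / 2)
          - ((m : ℝ) / ((2 : ℝ) ^ q - 1) + 1) / 2 = (k : ℝ))
        ↔ ((m : ℝ) + (2 : ℝ) ^ q - 1 = 2 * k) := by
    intro k
    rw [div_add' _ _ _ hN]
    field_simp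
    constructor <;> intro h <;> nlinarith [h]
  constructor
  · rintro ⟨k, hk⟩
    rw [hsimp] at hk
    have hint : (m : ℤ) + 2 ^ q - 1 = 2 * k := by exact_mod_cast hk
    have hpz : (2 : ℤ) ^ q = 2 * 2 ^ (q - 1) := by
      conv_lhs => rw [hqe, pow_succ, mul_comm]
    rw [Nat.odd_iff]
    omega
  · rintro ⟨a, ha⟩
    refine ⟨(a : ℤ) + 2 ^ (q - 1), ?_⟩
    rw [hsimp]
    subst ha
    push_cast
    rw [hpow]
    ring
end

section
/- Let q ≥ 1 and t = m/(2^q − 1) with 0 ≤ m < 2^q − 1. If (t+1)/2 is NOT periodic of period dividing q under the doubling map on ℝ/ℤ, then 1 − t = m̃/(2^q − 1) with m̃ = 2^q − 1 − m odd, and ((1−t)+1)/2 IS periodic of period dividing q under doubling. -/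
/-- If for `t = m/(2^q−1)` the point `(t+1)/2` is not periodic of period dividing `q`
under doubling on `ℝ/ℤ`, then `1 − t = (2^q−1−m)/(2^q−1)` with `2^q−1−m` odd, and
`((1−t)+1)/2` is periodic of period dividing `q` under doubling. -/
theorem stmt10 (q m : ℕ) (hq : 1 ≤ q) (hm : m < 2 ^ q - 1)
    (h : ¬ ∃ k : ℤ,
        (2 : ℝ) ^ q * (((m : ℝ) / ((2 : ℝ) ^ q - 1) + 1) / 2)
          - ((m : ℝ) / ((2 : ℝ) ^ q - 1) + 1) / 2 = (k : ℝ)) :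
    1 - (m : ℝ) / ((2 : ℝ) ^ q - 1)
        = ((2 ^ q - 1 - m : ℕ) : ℝ) / ((2 : ℝ) ^ q - 1) ∧
    Odd (2 ^ q - 1 - m) ∧
    (∃ k : ℤ,
        (2 : ℝ) ^ q * (((1 - (m : ℝ) / ((2 : ℝ) ^ q - 1)) + 1) / 2)
          - ((1 - (m : ℝ) / ((2 : ℝ) ^ q - 1)) + 1) / 2 = (k : ℝ)) := by
  obtain ⟨n, rfl⟩ := Nat.exists_eq_add_of_le hq
  have hpow : (2 : ℕ) ^ (1 + n) = 2 * 2 ^ n := by rw [pow_add, pow_one]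
  have h1lt : (1 : ℝ) < (2 : ℝ) ^ (1 + n) := by
    apply one_lt_pow₀ (by norm_num) (by omega)
  have hD : (2 : ℝ) ^ (1 + n) - 1 ≠ 0 := sub_ne_zero.mpr (ne_of_gt h1lt)
  -- m is even
  have hme : Even m := by
    by_contra ho
    rw [Nat.not_even_iff_odd] at ho
    obtain ⟨j, hj⟩ := ho
    apply h
    refine ⟨(j : ℤ) + 2 ^ n, ?_⟩
    subst hj
    push_cast
    field_simp
    ring
  obtain ⟨j, hj⟩ := hme
  have hmle : m ≤ 2 ^ (1 + n) - 1 := hm.le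
  have hcast : ((2 ^ (1 + n) - 1 - m : ℕ) : ℝ) = (2 : ℝ) ^ (1 + n) - 1 - m := by
    have h1 : 1 ≤ (2 : ℕ) ^ (1 + n) := Nat.one_le_two_pow
    push_cast [Nat.cast_sub hmle, Nat.cast_sub h1]
    ring
  refine ⟨?_, ?_, ?_⟩
  · rw [hcast]
    field_simp
  · rw [Nat.odd_iff]
    omega
  · refine ⟨(2 : ℤ) ^ (1 + n) - 1 - j, ?_⟩
    subst hj
    push_cast
    field_simp
    ring
end

section
/- Fix q ≥ 1 and 1 ≤ m ≤ q−1. Suppose real numbers d_0, d_1, …, d_{q−1} satisfy: Σ_{k=0}^{q−1} d_k = 1, 3d_0 = 1 + d_1, 3d_m = 1 + d_{(m+1) mod q}, and 3d_i = d_{(i+1) mod q} for all i ∉ {0, m}. Then d_0 = (3^q/(3^q − 1)) · (3^{−(m+1)} + 1/3) and d_m = (3^q/(3^q − 1)) · (3^{−(q+1−m)} + 1/3). -/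
/-- The bitransitive-case linear system of Lemma 3.3: `Σ d_k = 1`, `3d_0 = 1 + d_1`,
`3d_m = 1 + d_{m+1}`, `3d_i = d_{i+1}` for `i ∉ {0,m}`, implies the stated values
for `d_0` and `d_m`. -/
theorem stmt13 (q : ℕ) [NeZero q] (m : ℕ) (hm1 : 1 ≤ m) (hm2 : m ≤ q - 1)
    (d : ZMod q → ℝ)
    (hsum : ∑ k : ZMod q, d k = 1)
    (h0 : 3 * d 0 = 1 + d 1)
    (hm : 3 * d (m : ZMod q) = 1 + d ((m : ZMod q) + 1))
    (hi : ∀ i : ZMod q, i ≠ 0 → i ≠ (m : ZMod q) → 3 * d i = d (i + 1)) :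
    d 0 = ((3 : ℝ) ^ q / ((3 : ℝ) ^ q - 1)) * (1 / (3 : ℝ) ^ (m + 1) + 1 / 3) ∧
    d (m : ZMod q)
      = ((3 : ℝ) ^ q / ((3 : ℝ) ^ q - 1)) * (1 / (3 : ℝ) ^ (q + 1 - m) + 1 / 3) := by
  have hq0 : q ≠ 0 := NeZero.ne q
  have hq2 : 2 ≤ q := by omega
  have hmlt : m < q := by omega
  have hinj : ∀ a b : ℕ, a < q → b < q → ((a : ZMod q) = (b : ZMod q) ↔ a = b) := by
    intro a b ha hb
    rw [ZMod.natCast_eq_natCast_iff, Nat.ModEq, Nat.mod_eq_of_lt ha, Nat.mod_eq_of_lt hb]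
  have hne0 : ∀ k : ℕ, 1 ≤ k → k < q → (k : ZMod q) ≠ 0 := by
    intro k h1 h2 h
    have h' : (k : ZMod q) = ((0 : ℕ) : ZMod q) := by simpa using h
    have := (hinj k 0 h2 (by omega)).mp h'
    omega
  have hnem : ∀ k : ℕ, k < q → k ≠ m → (k : ZMod q) ≠ (m : ZMod q) := by
    intro k h2 h3 h
    exact h3 ((hinj k m h2 hmlt).mp h)
  have hA : ∀ k : ℕ, 1 ≤ k → k ≤ m → d (k : ZMod q) = 3 ^ k * d 0 - 3 ^ (k - 1) := by
    intro k
    induction k with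
    | zero => omega
    | succ n ih =>
      intro h1 h2
      rcases Nat.eq_zero_or_pos n with hn | hn
      · subst hn
        push_cast
        simp only [pow_one, pow_zero]
        linarith
      · have key := hi (n : ZMod q) (hne0 n hn (by omega)) (hnem n (by omega) (by omega))
        have ihv := ih hn (by omega)
        have hcast : ((n + 1 : ℕ) : ZMod q) = (n : ZMod q) + 1 := by push_cast; ring
        have h3 : (3 : ℝ) ^ (n - 1) * 3 = 3 ^ n := by
          rw [← pow_succ]; congr 1; omega
        rw [hcast, ← key, ihv, show n + 1 - 1 = n from rfl, pow_succ]
        linear_combination -h3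
  have hdm := hA m hm1 le_rfl
  have hB : ∀ k : ℕ, m + 1 ≤ k → k ≤ q →
      d (k : ZMod q) = 3 ^ k * d 0 - 3 ^ (k - 1) - 3 ^ (k - 1 - m) := by
    intro k
    induction k with
    | zero => omega
    | succ n ih =>
      intro h1 h2
      rcases Nat.lt_or_ge n (m + 1) with hn | hn
      · -- base case n = m
        have hnm : n = m := by omega
        subst hnm
        have hcast : ((n + 1 : ℕ) : ZMod q) = (n : ZMod q) + 1 := by push_cast; ring
        have h3 : (3 : ℝ) ^ (n - 1) * 3 = 3 ^ n := by
          rw [← pow_succ]; congr 1; omega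
        rw [hcast, show n + 1 - 1 = n from rfl, show n - n = 0 from by omega,
          pow_succ, pow_zero]
        have := hm
        rw [hdm] at this
        linear_combination -this - h3
      · have key := hi (n : ZMod q) (hne0 n (by omega) (by omega))
          (hnem n (by omega) (by omega))
        have ihv := ih hn (by omega)
        have hcast : ((n + 1 : ℕ) : ZMod q) = (n : ZMod q) + 1 := by push_cast; ring
        have h3 : (3 : ℝ) ^ (n - 1) * 3 = 3 ^ n := by
          rw [← pow_succ]; congr 1; omega
        have h3' : (3 : ℝ) ^ (n - 1 - m) * 3 = 3 ^ (n - m) := by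
          rw [← pow_succ]; congr 1; omega
        rw [hcast, ← key, ihv, show n + 1 - 1 = n from rfl, pow_succ]
        linear_combination -h3 - h3'
  have hclose := hB q (by omega) le_rfl
  rw [show ((q : ℕ) : ZMod q) = 0 from ZMod.natCast_self q] at hclose
  -- arithmetic facts
  have e1 : (3 : ℝ) ^ (q - 1) * 3 = 3 ^ q := by rw [← pow_succ]; congr 1; omega
  have e2 : (3 : ℝ) ^ (q - 1 - m) * 3 ^ (m + 1) = 3 ^ q := by
    rw [← pow_add]; congr 1; omega
  have e3 : (3 : ℝ) ^ (m - 1) * 3 = 3 ^ m := by rw [← pow_succ]; congr 1; omega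
  have e4 : (3 : ℝ) ^ (q + 1 - m) * 3 ^ (m - 1) = 3 ^ q := by
    rw [← pow_add]; congr 1; omega
  have hpos : (1 : ℝ) < 3 ^ q := by
    calc (1 : ℝ) < 3 ^ 1 := by norm_num
    _ ≤ 3 ^ q := by apply pow_le_pow_right₀ <;> norm_num <;> omega
  have hne : (3 : ℝ) ^ q - 1 ≠ 0 := by linarith
  have hpm1 : (3 : ℝ) ^ (m + 1) ≠ 0 := by positivity
  have hpq1m : (3 : ℝ) ^ (q + 1 - m) ≠ 0 := by positivity
  have target1 : d 0 * ((3:ℝ) ^ q - 1) = 3 ^ (q - 1 - m) + 3 ^ (q - 1) := by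
    linear_combination -hclose
  have e5 : (3 : ℝ) ^ m * 3 ^ (q - 1 - m) = 3 ^ (q - 1) := by rw [← pow_add]; congr 1; omega
  have e6 : (3 : ℝ) ^ (m - 1) * 3 ^ q = 3 ^ m * 3 ^ (q - 1) := by
    rw [← pow_add, ← pow_add]; congr 1; omega
  have target2 : d (m : ZMod q) * ((3:ℝ) ^ q - 1) = 3 ^ (m - 1) + 3 ^ (q - 1) := by
    rw [hdm]
    linear_combination 3 ^ m * target1 + e5 - e6
  constructor
  · rw [eq_comm, div_mul_eq_mul_div, div_eq_iff hne, target1]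
    field_simp
    linear_combination (-3:ℝ) * e2 - 3 * 3 ^ m * e1
  · rw [eq_comm, div_mul_eq_mul_div, div_eq_iff hne, target2]
    field_simp
    linear_combination (-3:ℝ) * e4 - 3 ^ (q + 1 - m) * e1
end
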